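/- For all positive integers a, b, c, every real m ≥ 2, and all real z₁, z₂ < 1: b·H_{b+1,c,a}(z₁,z₂;m) = (a + b + c + m/2 − 2)·H_{b,c,a}(z₁,z₂;m) − c·(1−z₁)·H_{b,c+1,a}(z₁,z₂;m) − a·(1−z₂)·H_{b,c,a+1}(z₁,z₂;m). -/
import Mathlib

open MeasureTheory Set

/-- Two-variable hypergeometric family `H_{a,b,c}(z₁,z₂;m)` from the rearrangement lemma. -/
noncomputable def Habc (a b c : ℕ) (m z₁ z₂ : ℝ) : ℝ :=
  (Real.Gamma ((a : ℝ) + b + c + m / 2 - 2) /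
      (Real.Gamma a * Real.Gamma b * Real.Gamma c)) *
    ∫ t in (0:ℝ)..1, ∫ u in (0:ℝ)..(1 - t),
      (1 - t - u) ^ (a - 1) * t ^ (b - 1) * u ^ (c - 1) *
        (1 - z₁ * t - z₂ * u) ^ (-((a : ℝ) + b + c + m / 2 - 2))


/-- Truncated version of `1 - z₁ t - z₂ u`, positive everywhere and equal to it
on the integration triangle. -/
noncomputable def Yfun (z₁ z₂ t u : ℝ) : ℝ :=
  max (1 - z₁ * t - z₂ * u) (min 1 (min (1 - z₁) (1 - z₂)))

/-- Regularized integrand. -/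
noncomputable def gfun (z₁ z₂ : ℝ) (p q r : ℕ) (e t u : ℝ) : ℝ :=
  (1 - t - u) ^ p * t ^ q * u ^ r * Yfun z₁ z₂ t u ^ (-e)

/-- Regularized double integral. -/
noncomputable def Jint (z₁ z₂ : ℝ) (p q r : ℕ) (e : ℝ) : ℝ :=
  ∫ t in (0:ℝ)..1, ∫ u in (0:ℝ)..(1 - t), gfun z₁ z₂ p q r e t u

lemma Yfun_pos {z₁ z₂ : ℝ} (hz₁ : z₁ < 1) (hz₂ : z₂ < 1) (t u : ℝ) :
    0 < Yfun z₁ z₂ t u :=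
  lt_max_of_lt_right (lt_min one_pos (lt_min (by linarith) (by linarith)))

lemma Yfun_eq {z₁ z₂ : ℝ} (hz₁ : z₁ < 1) (hz₂ : z₂ < 1) {t u : ℝ}
    (ht0 : 0 ≤ t) (hu0 : 0 ≤ u) (htu : t + u ≤ 1) :
    Yfun z₁ z₂ t u = 1 - z₁ * t - z₂ * u := by
  have hδ1 : min 1 (min (1 - z₁) (1 - z₂)) ≤ 1 := min_le_left _ _
  have hδ2 : min 1 (min (1 - z₁) (1 - z₂)) ≤ 1 - z₁ :=
    le_trans (min_le_right _ _) (min_le_left _ _)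
  have hδ3 : min 1 (min (1 - z₁) (1 - z₂)) ≤ 1 - z₂ :=
    le_trans (min_le_right _ _) (min_le_right _ _)
  set δ := min 1 (min (1 - z₁) (1 - z₂)) with hδdef
  have h1 : δ * (1 - t - u) ≤ 1 * (1 - t - u) :=
    mul_le_mul_of_nonneg_right hδ1 (by linarith)
  have h2 : δ * t ≤ (1 - z₁) * t := mul_le_mul_of_nonneg_right hδ2 ht0
  have h3 : δ * u ≤ (1 - z₂) * u := mul_le_mul_of_nonneg_right hδ3 hu0
  exact max_eq_left (by nlinarith [h1, h2, h3])

lemma gfun_continuous {z₁ z₂ : ℝ} (hz₁ : z₁ < 1) (hz₂ : z₂ < 1)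
    (p q r : ℕ) (e : ℝ) :
    Continuous (fun x : ℝ × ℝ => gfun z₁ z₂ p q r e x.1 x.2) := by
  have hY : Continuous (fun x : ℝ × ℝ => Yfun z₁ z₂ x.1 x.2) := by
    unfold Yfun; fun_prop
  have hpow : Continuous (fun x : ℝ × ℝ => Yfun z₁ z₂ x.1 x.2 ^ (-e)) :=
    hY.rpow_const (fun x => Or.inl (Yfun_pos hz₁ hz₂ x.1 x.2).ne')
  unfold gfun
  exact (((by fun_prop : Continuous (fun x : ℝ × ℝ => (1 - x.1 - x.2) ^ p * x.1 ^ q * x.2 ^ r))).mul hpow)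

lemma Gcont {z₁ z₂ : ℝ} (hz₁ : z₁ < 1) (hz₂ : z₂ < 1) (p q r : ℕ) (e : ℝ) :
    Continuous (fun t : ℝ => ∫ u in (0:ℝ)..(1 - t), gfun z₁ z₂ p q r e t u) :=
  intervalIntegral.continuous_parametric_intervalIntegral_of_continuous
    (f := fun t u => gfun z₁ z₂ p q r e t u)
    (gfun_continuous hz₁ hz₂ p q r e) (by fun_prop : Continuous fun t : ℝ => 1 - t)

lemma Jrec {z₁ z₂ : ℝ} (hz₁ : z₁ < 1) (hz₂ : z₂ < 1) (A B C : ℕ) (e : ℝ) :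
    Jint z₁ z₂ (B+1) C A (e+1)
      = Jint z₁ z₂ B C A e - (1 - z₁) * Jint z₁ z₂ B (C+1) A (e+1)
        - (1 - z₂) * Jint z₁ z₂ B C (A+1) (e+1) := by
  have i1 : IntervalIntegrable
      (fun t : ℝ => ∫ u in (0:ℝ)..(1 - t), gfun z₁ z₂ B C A e t u) volume 0 1 :=
    (Gcont hz₁ hz₂ B C A e).intervalIntegrable 0 1
  have i2 : IntervalIntegrable
      (fun t : ℝ => ∫ u in (0:ℝ)..(1 - t), gfun z₁ z₂ B (C+1) A (e+1) t u) volume 0 1 :=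
    (Gcont hz₁ hz₂ B (C+1) A (e+1)).intervalIntegrable 0 1
  have i3 : IntervalIntegrable
      (fun t : ℝ => ∫ u in (0:ℝ)..(1 - t), gfun z₁ z₂ B C (A+1) (e+1) t u) volume 0 1 :=
    (Gcont hz₁ hz₂ B C (A+1) (e+1)).intervalIntegrable 0 1
  unfold Jint
  rw [← intervalIntegral.integral_const_mul (1 - z₁),
      ← intervalIntegral.integral_const_mul (1 - z₂),
      ← intervalIntegral.integral_sub i1 (i2.const_mul _),
      ← intervalIntegral.integral_sub (i1.sub (i2.const_mul _)) (i3.const_mul _)]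
  apply intervalIntegral.integral_congr
  intro t ht
  rw [Set.uIcc_of_le (by norm_num : (0:ℝ) ≤ 1)] at ht
  have j : ∀ (p q r : ℕ) (e' : ℝ),
      IntervalIntegrable (fun u => gfun z₁ z₂ p q r e' t u) volume 0 (1 - t) :=
    fun p q r e' =>
      ((gfun_continuous hz₁ hz₂ p q r e').comp (Continuous.prodMk_right t)).intervalIntegrable 0 (1 - t)
  simp only
  rw [← intervalIntegral.integral_const_mul (1 - z₁),
      ← intervalIntegral.integral_const_mul (1 - z₂),
      ← intervalIntegral.integral_sub (j B C A e) ((j B (C+1) A (e+1)).const_mul _),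
      ← intervalIntegral.integral_sub ((j B C A e).sub ((j B (C+1) A (e+1)).const_mul _))
        ((j B C (A+1) (e+1)).const_mul _)]
  apply intervalIntegral.integral_congr
  intro u hu
  rw [Set.uIcc_of_le (by linarith [ht.2] : (0:ℝ) ≤ 1 - t)] at hu
  have hY := Yfun_eq hz₁ hz₂ ht.1 hu.1 (by linarith [hu.2])
  have hYpos : (0:ℝ) < 1 - z₁ * t - z₂ * u := hY ▸ Yfun_pos hz₁ hz₂ t u
  simp only [gfun, hY]
  have hsplit : (1 - z₁ * t - z₂ * u) ^ (-e)
      = (1 - z₁ * t - z₂ * u) ^ (-(e+1)) * (1 - z₁ * t - z₂ * u) := by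
    rw [← Real.rpow_add_one hYpos.ne' (-(e+1))]
    ring_nf
  rw [hsplit]; ring

lemma Habc_eq {z₁ z₂ : ℝ} (hz₁ : z₁ < 1) (hz₂ : z₂ < 1) (a b c : ℕ) (m : ℝ) :
    Habc a b c m z₁ z₂ =
      Real.Gamma ((a:ℝ) + b + c + m/2 - 2) /
          (Real.Gamma a * Real.Gamma b * Real.Gamma c) *
        Jint z₁ z₂ (a-1) (b-1) (c-1) ((a:ℝ) + b + c + m/2 - 2) := by
  unfold Habc Jint gfun
  congr 1
  apply intervalIntegral.integral_congr
  intro t ht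
  rw [Set.uIcc_of_le (by norm_num : (0:ℝ) ≤ 1)] at ht
  simp only
  apply intervalIntegral.integral_congr
  intro u hu
  rw [Set.uIcc_of_le (by linarith [ht.2] : (0:ℝ) ≤ 1 - t)] at hu
  simp only [Yfun_eq hz₁ hz₂ ht.1 hu.1 (by linarith [hu.2])]

/-- Recurrence relation for the two-variable family. -/
theorem stmt17 (a b c : ℕ) (ha : 0 < a) (hb : 0 < b) (hc : 0 < c)
    (m : ℝ) (hm : 2 ≤ m) (z₁ z₂ : ℝ) (hz₁ : z₁ < 1) (hz₂ : z₂ < 1) :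
    (b : ℝ) * Habc (b + 1) c a m z₁ z₂ =
      ((a : ℝ) + b + c + m / 2 - 2) * Habc b c a m z₁ z₂
        - (c : ℝ) * (1 - z₁) * Habc b (c + 1) a m z₁ z₂
        - (a : ℝ) * (1 - z₂) * Habc b c (a + 1) m z₁ z₂ := by
  obtain ⟨A, rfl⟩ : ∃ A, a = A + 1 := ⟨a - 1, by omega⟩
  obtain ⟨B, rfl⟩ : ∃ B, b = B + 1 := ⟨b - 1, by omega⟩
  obtain ⟨C, rfl⟩ : ∃ C, c = C + 1 := ⟨c - 1, by omega⟩
  set D : ℝ := (A:ℝ) + B + C + m/2 + 1 with hDdef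
  have hD : 0 < D := by
    have h1 : (0:ℝ) ≤ (A:ℝ) := Nat.cast_nonneg A
    have h2 : (0:ℝ) ≤ (B:ℝ) := Nat.cast_nonneg B
    have h3 : (0:ℝ) ≤ (C:ℝ) := Nat.cast_nonneg C
    have h4 : (1:ℝ) ≤ m/2 := by linarith
    rw [hDdef]; linarith
  rw [Habc_eq hz₁ hz₂ (B+1+1) (C+1) (A+1) m,
      Habc_eq hz₁ hz₂ (B+1) (C+1) (A+1) m,
      Habc_eq hz₁ hz₂ (B+1) (C+1+1) (A+1) m,
      Habc_eq hz₁ hz₂ (B+1) (C+1) (A+1+1) m]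
  simp only [Nat.add_sub_cancel]
  have e0 : ((A+1:ℕ):ℝ) + ((B+1:ℕ):ℝ) + ((C+1:ℕ):ℝ) + m/2 - 2 = D := by
    rw [hDdef]; push_cast; ring
  have e1 : ((B+1+1:ℕ):ℝ) + ((C+1:ℕ):ℝ) + ((A+1:ℕ):ℝ) + m/2 - 2 = D + 1 := by
    rw [hDdef]; push_cast; ring
  have e2 : ((B+1:ℕ):ℝ) + ((C+1:ℕ):ℝ) + ((A+1:ℕ):ℝ) + m/2 - 2 = D := by
    rw [hDdef]; push_cast; ring
  have e3 : ((B+1:ℕ):ℝ) + ((C+1+1:ℕ):ℝ) + ((A+1:ℕ):ℝ) + m/2 - 2 = D + 1 := by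
    rw [hDdef]; push_cast; ring
  have e4 : ((B+1:ℕ):ℝ) + ((C+1:ℕ):ℝ) + ((A+1+1:ℕ):ℝ) + m/2 - 2 = D + 1 := by
    rw [hDdef]; push_cast; ring
  rw [e0, e1, e2, e3, e4]
  rw [Jrec hz₁ hz₂ A B C D]
  have gB : Real.Gamma ((B+1+1:ℕ):ℝ) = ((B+1:ℕ):ℝ) * Real.Gamma ((B+1:ℕ):ℝ) := by
    have h : ((B+1+1:ℕ):ℝ) = ((B+1:ℕ):ℝ) + 1 := by push_cast; ring
    rw [h, Real.Gamma_add_one (Nat.cast_ne_zero.mpr (Nat.succ_ne_zero B))]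
  have gC : Real.Gamma ((C+1+1:ℕ):ℝ) = ((C+1:ℕ):ℝ) * Real.Gamma ((C+1:ℕ):ℝ) := by
    have h : ((C+1+1:ℕ):ℝ) = ((C+1:ℕ):ℝ) + 1 := by push_cast; ring
    rw [h, Real.Gamma_add_one (Nat.cast_ne_zero.mpr (Nat.succ_ne_zero C))]
  have gA : Real.Gamma ((A+1+1:ℕ):ℝ) = ((A+1:ℕ):ℝ) * Real.Gamma ((A+1:ℕ):ℝ) := by
    have h : ((A+1+1:ℕ):ℝ) = ((A+1:ℕ):ℝ) + 1 := by push_cast; ring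
    rw [h, Real.Gamma_add_one (Nat.cast_ne_zero.mpr (Nat.succ_ne_zero A))]
  have gD : Real.Gamma (D + 1) = D * Real.Gamma D := Real.Gamma_add_one hD.ne'
  rw [gA, gB, gC, gD]
  have nA : Real.Gamma ((A+1:ℕ):ℝ) ≠ 0 :=
    (Real.Gamma_pos_of_pos (by exact_mod_cast Nat.succ_pos A)).ne'
  have nB : Real.Gamma ((B+1:ℕ):ℝ) ≠ 0 :=
    (Real.Gamma_pos_of_pos (by exact_mod_cast Nat.succ_pos B)).ne'
  have nC : Real.Gamma ((C+1:ℕ):ℝ) ≠ 0 :=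
    (Real.Gamma_pos_of_pos (by exact_mod_cast Nat.succ_pos C)).ne'
  have cA : ((A+1:ℕ):ℝ) ≠ 0 := Nat.cast_ne_zero.mpr (Nat.succ_ne_zero A)
  have cB : ((B+1:ℕ):ℝ) ≠ 0 := Nat.cast_ne_zero.mpr (Nat.succ_ne_zero B)
  have cC : ((C+1:ℕ):ℝ) ≠ 0 := Nat.cast_ne_zero.mpr (Nat.succ_ne_zero C)
  field_simp
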